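/- arXiv:0907.1722 — 3 statements merged into one kernel-verified Lean document; each statement's English description precedes it below -/
import Mathlib

section
/- Let S = (X, ≺, ⊏) be a so-structure on a finite set X, let Θ_S = (X, sim_S, ser_S) (which is a comtrace alphabet), and let ⊲ ∈ ext(S). Then: (1) { Ω_⊲' | ⊲' ∈ ext(S) } = [Ω_⊲], the comtrace congruence class of Ω_⊲ over Θ_S; (2) (X, ⋂_{x ∈ [Ω_⊲]} ⊲_x, ⋂_{x ∈ [Ω_⊲]} (⊲_x)⌢) = (X, ≺, ⊏). -/
/-- A stratified order on `X`: an irreflexive, transitive relation such that the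
relation `a ≃ b ↔ a = b ∨ (¬ r a b ∧ ¬ r b a)` is transitive. -/
def IsStratOrder {X : Type*} (r : X → X → Prop) : Prop :=
  (∀ a, ¬ r a a) ∧ (∀ a b c, r a b → r b c → r a c) ∧
  (∀ a b c, (a = b ∨ (¬ r a b ∧ ¬ r b a)) → (b = c ∨ (¬ r b c ∧ ¬ r c b)) →
    (a = c ∨ (¬ r a c ∧ ¬ r c a)))

/-- A stratified order structure `(X, ≺, ⊏)`: axioms S1–S4. -/
def IsSOStruct {X : Type*} (prec sub : X → X → Prop) : Prop :=
  (∀ a, ¬ sub a a) ∧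
  (∀ a b, prec a b → sub a b) ∧
  (∀ a b c, sub a b → sub b c → a ≠ c → sub a c) ∧
  (∀ a b c, (sub a b ∧ prec b c) ∨ (prec a b ∧ sub b c) → prec a c)

/-- A stratified extension of a so-structure `(X, prec, sub)`: a stratified order `r`
with `prec ⊆ r` and `sub ⊆ r⌢`. -/
def IsStratExt {X : Type*} (prec sub r : X → X → Prop) : Prop :=
  IsStratOrder r ∧ (∀ a b, prec a b → r a b) ∧ (∀ a b, sub a b → a ≠ b ∧ ¬ r b a)

/-- The simultaneity relation of a so-structure. -/
def simS {X : Type*} (prec : X → X → Prop) (a b : X) : Prop :=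
  a ≠ b ∧ ¬ prec a b ∧ ¬ prec b a

/-- The serializability relation of a so-structure. -/
def serS {X : Type*} (prec sub : X → X → Prop) (a b : X) : Prop :=
  simS prec a b ∧ ¬ sub b a

variable {E : Type*}

/-- A step over a comtrace alphabet `(E, sim, ser)`: a nonempty finite set of events,
pairwise related by `sim`. -/
def IsStep [DecidableEq E] (sim : E → E → Prop) (A : Finset E) : Prop :=
  A.Nonempty ∧ ∀ a ∈ A, ∀ b ∈ A, a ≠ b → sim a b

/-- A step sequence: a finite list of steps. -/
def IsStepSeq [DecidableEq E] (sim : E → E → Prop) (u : List (Finset E)) : Prop :=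
  ∀ A ∈ u, IsStep sim A

/-- The generating relation of comtrace congruence:
`w·A·z ≈ w·B·C·z` whenever `A`, `B`, `C` are steps with `B ∪ C = A` and `B × C ⊆ ser`. -/
def CTBase [DecidableEq E] (sim ser : E → E → Prop) (u v : List (Finset E)) : Prop :=
  ∃ (w z : List (Finset E)) (A B C : Finset E),
    IsStepSeq sim w ∧ IsStepSeq sim z ∧
    IsStep sim A ∧ IsStep sim B ∧ IsStep sim C ∧
    B ∪ C = A ∧ (∀ b ∈ B, ∀ c ∈ C, ser b c) ∧
    u = w ++ A :: z ∧ v = w ++ B :: C :: z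

/-- The least equivalence relation containing `base`. -/
def LeastEquiv {α : Type*} (base : α → α → Prop) (x y : α) : Prop :=
  ∀ c : α → α → Prop, Equivalence c → (∀ a b, base a b → c a b) → c x y

/-- Comtrace congruence: the least equivalence relation containing `CTBase`. -/
def CTEquiv [DecidableEq E] (sim ser : E → E → Prop) :
    List (Finset E) → List (Finset E) → Prop :=
  LeastEquiv (CTBase sim ser)

/-- `posFirst x a`: the index of the first step of `x` containing `a`. -/
def posFirst {X : Type*} [DecidableEq X] (x : List (Finset X)) (a : X) : ℕ :=
  x.findIdx (fun A => decide (a ∈ A))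

/-- `IsOmega r u`: `u` is the step sequence representing the stratified order `r`:
its steps are the equivalence classes of `≃_r`, each element occurs in exactly one
step, and `r a b` holds iff `a` occurs in an earlier step than `b`. -/
def IsOmega {X : Type*} [DecidableEq X] (r : X → X → Prop)
    (u : List (Finset X)) : Prop :=
  (∀ a : X, ∃! i : Fin u.length, a ∈ u.get i) ∧
  (∀ B ∈ u, ∃ a : X, ∀ x : X, x ∈ B ↔ (x = a ∨ (¬ r x a ∧ ¬ r a x))) ∧
  (∀ a b : X, r a b ↔
    ∃ i j : Fin u.length, (i : ℕ) < (j : ℕ) ∧ a ∈ u.get i ∧ b ∈ u.get j)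

/-!
A step sequence that lists every event once, with `≺` strictly and `⊏` weakly increasing the
step index, is exactly an `Ω_⊲` with `⊲ ∈ ext(S)`. Splitting a step `A` into `B · C` with
`B × C ⊆ ser_S` preserves this property in both directions, so `[Ω_⊲]` consists of such
sequences only. Conversely any two of them are congruent: the first step `B` of one of them may
be executed first, and the other one is rewritten to start with `B` by splitting and swapping
parts of its steps, after which induction applies. For the second claim, if `a ⊀ b` (resp.
`a ⋢ b`, `a ≠ b`) there is a rank function compatible with `S` putting `b` no later (resp.
strictly earlier) than `a`; its fibres form a member of `[Ω_⊲]` witnessing this.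
-/

open Finset Relation

section ConsNonempty

/-- Lets a step be split into possibly empty parts without case distinctions. -/
def consNonempty (B : Finset E) (u : List (Finset E)) : List (Finset E) :=
  if B.Nonempty then B :: u else u

@[simp]
theorem consNonempty_of_nonempty {B : Finset E} {u : List (Finset E)} (h : B.Nonempty) :
    consNonempty B u = B :: u :=
  if_pos h

@[simp]
theorem consNonempty_empty (u : List (Finset E)) : consNonempty ∅ u = u :=
  if_neg Finset.not_nonempty_empty

end ConsNonempty

namespace CTEquiv

variable [DecidableEq E] {sim ser : E → E → Prop} {u v w : List (Finset E)}

@[refl]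
theorem refl (u : List (Finset E)) : CTEquiv sim ser u u :=
  fun _ hc _ => hc.refl u

theorem symm (h : CTEquiv sim ser u v) : CTEquiv sim ser v u :=
  fun c hc hb => hc.symm (h c hc hb)

theorem trans (h₁ : CTEquiv sim ser u v) (h₂ : CTEquiv sim ser v w) : CTEquiv sim ser u w :=
  fun c hc hb => hc.trans (h₁ c hc hb) (h₂ c hc hb)

instance : Trans (CTEquiv (E := E) sim ser) (CTEquiv sim ser) (CTEquiv sim ser) :=
  ⟨CTEquiv.trans⟩

theorem of_ctBase (h : CTBase sim ser u v) : CTEquiv sim ser u v :=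
  fun _ _ hb => hb _ _ h

theorem iff_of_invariant {P : List (Finset E) → Prop}
    (hP : ∀ u v, CTBase sim ser u v → (P u ↔ P v)) (h : CTEquiv sim ser u v) : P u ↔ P v :=
  h (fun x y => P x ↔ P y) ⟨fun _ => Iff.rfl, Iff.symm, Iff.trans⟩ hP

theorem cons {B : Finset E} (hB : IsStep sim B) (h : CTEquiv sim ser u v) :
    CTEquiv sim ser (B :: u) (B :: v) := by
  refine h (fun x y => CTEquiv sim ser (B :: x) (B :: y)) ⟨fun _ => refl _, symm, trans⟩ ?_
  rintro _ _ ⟨w, z, A, B', C, hw, hz, hA, hB', hC, hun, hser, rfl, rfl⟩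
  refine of_ctBase ⟨B :: w, z, A, B', C, ?_, hz, hA, hB', hC, hun, hser, rfl, rfl⟩
  simpa [IsStepSeq] using ⟨hB, hw⟩

theorem consNonempty {B : Finset E} (hB : (B : Set E).Pairwise sim)
    (h : CTEquiv sim ser u v) : CTEquiv sim ser (consNonempty B u) (consNonempty B v) := by
  rcases B.eq_empty_or_nonempty with rfl | hne
  · simpa using h
  · simpa [hne] using h.cons ⟨hne, hB⟩

end CTEquiv

section Comtrace

variable [DecidableEq E] {sim ser : E → E → Prop}

theorem IsStepSeq.consNonempty {B : Finset E} {u : List (Finset E)}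
    (hB : (B : Set E).Pairwise sim) (hu : IsStepSeq sim u) :
    IsStepSeq sim (consNonempty B u) := by
  rcases B.eq_empty_or_nonempty with rfl | hne
  · simpa using hu
  · simpa [hne, IsStepSeq] using ⟨⟨hne, hB⟩, hu⟩

theorem ctEquiv_consNonempty_of_union_eq {A B C : Finset E} {z : List (Finset E)}
    (hA : B ∪ C = A) (hpw : (A : Set E).Pairwise sim) (hser : ∀ b ∈ B, ∀ c ∈ C, ser b c)
    (hz : IsStepSeq sim z) :
    CTEquiv sim ser (consNonempty A z) (consNonempty B (consNonempty C z)) := by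
  subst hA
  rcases B.eq_empty_or_nonempty with rfl | hB
  · simp [CTEquiv.refl]
  rcases C.eq_empty_or_nonempty with rfl | hC
  · simp [CTEquiv.refl]
  have hBC := hB.mono (subset_union_left (s₂ := C))
  simp only [consNonempty_of_nonempty, hB, hC, hBC]
  exact CTEquiv.of_ctBase ⟨[], z, _, B, C, by simp [IsStepSeq], hz, ⟨hBC, hpw⟩,
    ⟨hB, hpw.mono (by simp)⟩, ⟨hC, hpw.mono (by simp)⟩, rfl, hser, rfl, rfl⟩

theorem ctEquiv_consNonempty_comm {B C : Finset E} {z : List (Finset E)}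
    (hpw : ((B ∪ C : Finset E) : Set E).Pairwise sim) (hBC : ∀ b ∈ B, ∀ c ∈ C, ser b c)
    (hCB : ∀ c ∈ C, ∀ b ∈ B, ser c b) (hz : IsStepSeq sim z) :
    CTEquiv sim ser (consNonempty B (consNonempty C z)) (consNonempty C (consNonempty B z)) :=
  (ctEquiv_consNonempty_of_union_eq rfl hpw hBC hz).symm.trans
    (ctEquiv_consNonempty_of_union_eq (union_comm C B) hpw hCB hz)

end Comtrace

theorem exists_rank_of_lt_of_le {X : Type*} [Finite X] {lt le : X → X → Prop}
    (irrefl : ∀ x, ¬ lt x x) (le_of_lt : ∀ x y, lt x y → le x y)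
    (lt_of_lt_of_le : ∀ x y z, lt x y → le y z → lt x z) :
    ∃ g : X → ℕ, (∀ x y, lt x y → g x < g y) ∧ (∀ x y, le x y → g x ≤ g y) := by
  refine ⟨fun x => {z | lt z x}.ncard, fun x y hxy => ?_, fun x y hxy => ?_⟩
  · refine Set.ncard_lt_ncard ⟨fun z hz => lt_of_lt_of_le z x y hz (le_of_lt x y hxy),
      fun hsub => irrefl x (hsub hxy)⟩ (Set.toFinite _)
  · exact Set.ncard_le_ncard (fun z hz => lt_of_lt_of_le z x y hz hxy) (Set.toFinite _)

namespace IsSOStruct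

variable {X : Type*} {prec sub : X → X → Prop} {a b c : X}

theorem reflGen_trans (hS : IsSOStruct prec sub) (hab : ReflGen sub a b)
    (hbc : ReflGen sub b c) : ReflGen sub a c := by
  rcases hab with _ | hab
  · exact hbc
  rcases hbc with _ | hbc
  · exact .single hab
  by_cases hac : a = c
  · exact hac ▸ .refl
  · exact .single (hS.2.2.1 a b c hab hbc hac)

theorem prec_of_prec_of_reflGen (hS : IsSOStruct prec sub) (hab : prec a b)
    (hbc : ReflGen sub b c) : prec a c := by
  rcases hbc with _ | hbc
  exacts [hab, hS.2.2.2 a b c (.inr ⟨hab, hbc⟩)]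

theorem prec_of_reflGen_of_prec (hS : IsSOStruct prec sub) (hab : ReflGen sub a b)
    (hbc : prec b c) : prec a c := by
  rcases hab with _ | hab
  exacts [hbc, hS.2.2.2 a b c (.inl ⟨hab, hbc⟩)]

/-- The rank of `y` counts the elements strictly below `y` in the so-structure obtained by
adding `b ⊏ a`, or `b ≺ a` when `a ⋢ b`. -/
theorem exists_rank_of_not_prec [Finite X] (hS : IsSOStruct prec sub) (hab : ¬ prec a b) :
    ∃ g : X → ℕ, (∀ x y, prec x y → g x < g y) ∧ (∀ x y, sub x y → g x ≤ g y) ∧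
      g b ≤ g a ∧ (¬ ReflGen sub a b → g b < g a) := by
  let le x y := ReflGen sub x y ∨ (ReflGen sub x b ∧ ReflGen sub a y)
  let lt x y := prec x y ∨ (ReflGen sub x b ∧ ReflGen sub a y ∧
    (¬ ReflGen sub a b ∨ prec x b ∨ prec a y))
  have irrefl : ∀ x, ¬ lt x x := by
    rintro x (hxx | ⟨hxb, hax, hab' | hxb' | hax'⟩)
    · exact hS.1 x (hS.2.1 x x hxx)
    · exact hab' (hS.reflGen_trans hax hxb)
    · exact hab (hS.prec_of_reflGen_of_prec hax hxb')
    · exact hab (hS.prec_of_prec_of_reflGen hax' hxb)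
  have le_of_lt : ∀ x y, lt x y → le x y := by
    rintro x y (hxy | ⟨hxb, hay, -⟩)
    exacts [.inl (.single (hS.2.1 x y hxy)), .inr ⟨hxb, hay⟩]
  have lt_of_lt_of_le : ∀ x y z, lt x y → le y z → lt x z := by
    rintro x y z (hxy | ⟨hxb, hay, hs⟩) (hyz | ⟨hyb, haz⟩)
    · exact .inl (hS.prec_of_prec_of_reflGen hxy hyz)
    · have hxb' := hS.prec_of_prec_of_reflGen hxy hyb
      exact .inr ⟨.single (hS.2.1 x b hxb'), haz, .inr (.inl hxb')⟩
    · refine .inr ⟨hxb, hS.reflGen_trans hay hyz, ?_⟩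
      exact hs.imp_right (Or.imp_right fun hay' => hS.prec_of_prec_of_reflGen hay' hyz)
    · have hab' := hS.reflGen_trans hay hyb
      rcases hs with hs | hxb' | hay'
      · exact absurd hab' hs
      · exact .inr ⟨hxb, haz, .inr (.inl hxb')⟩
      · exact absurd (hS.prec_of_prec_of_reflGen hay' hyb) hab
  obtain ⟨g, hlt, hle⟩ := exists_rank_of_lt_of_le irrefl le_of_lt lt_of_lt_of_le
  exact ⟨g, fun x y h => hlt x y (.inl h), fun x y h => hle x y (.inl (.single h)),
    hle b a (.inr ⟨.refl, .refl⟩), fun h => hlt b a (.inr ⟨.refl, .refl, .inl h⟩)⟩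

end IsSOStruct

section Initial

variable {X : Type*} {prec sub : X → X → Prop}

/-- `P` can be executed as the first step among the events of `Y`. -/
def IsInitial (prec sub : X → X → Prop) (Y P : Finset X) : Prop :=
  P ⊆ Y ∧ ∀ p ∈ P, ∀ x ∈ Y, ¬ prec x p ∧ (sub x p → x ∈ P)

theorem IsInitial.pairwise_simS {Y P : Finset X} (hP : IsInitial prec sub Y P) :
    (P : Set X).Pairwise (simS prec) :=
  fun a ha b hb hab => ⟨hab, (hP.2 b hb a (hP.1 ha)).1, (hP.2 a ha b (hP.1 hb)).1⟩

variable [DecidableEq X]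

theorem serS_of_isInitial {Y P Q : Finset X} {a c : X} (hP : IsInitial prec sub Y P)
    (hQ : IsInitial prec sub Y Q) (ha : a ∈ P) (hc : c ∈ Q \ P) : serS prec sub a c := by
  rw [mem_sdiff] at hc
  have haY := hP.1 ha
  have hcY := hQ.1 hc.1
  exact ⟨⟨fun h => hc.2 (h ▸ ha), (hQ.2 c hc.1 a haY).1, (hP.2 a ha c hcY).1⟩,
    fun h => hc.2 ((hP.2 a ha c hcY).2 h)⟩

theorem IsInitial.union {Y P Q : Finset X} (hP : IsInitial prec sub Y P)
    (hQ : IsInitial prec sub Y Q) : IsInitial prec sub Y (P ∪ Q) := by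
  refine ⟨union_subset hP.1 hQ.1, fun p hp x hx => ?_⟩
  rcases mem_union.1 hp with hp | hp
  · exact (hP.2 p hp x hx).imp_right fun h hs => mem_union_left _ (h hs)
  · exact (hQ.2 p hp x hx).imp_right fun h hs => mem_union_right _ (h hs)

theorem IsInitial.sdiff {Y P : Finset X} (hP : IsInitial prec sub Y P) (A : Finset X) :
    IsInitial prec sub (Y \ A) (P \ A) := by
  refine ⟨sdiff_subset_sdiff hP.1 subset_rfl, fun p hp x hx => ?_⟩
  rw [mem_sdiff] at hp hx
  exact (hP.2 p hp.1 x hx.1).imp_right fun h hs => mem_sdiff.2 ⟨h hs, hx.2⟩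

end Initial

section Position

variable {X : Type*} [DecidableEq X] {A B C : Finset X} {u w z : List (Finset X)} {a b : X}

@[simp]
theorem posFirst_cons_of_mem (h : a ∈ A) : posFirst (A :: w) a = 0 := by
  simp [posFirst, List.findIdx_cons, h]

@[simp]
theorem posFirst_cons_of_not_mem (h : a ∉ A) : posFirst (A :: w) a = posFirst w a + 1 := by
  simp [posFirst, List.findIdx_cons, h]

theorem mem_of_posFirst_append_cons (h : posFirst (w ++ A :: z) a = w.length) : a ∈ A := by
  simp only [posFirst, List.findIdx_append, List.findIdx_cons, Bool.cond_decide] at h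
  grind

theorem posFirst_append_cons_cons (a : X) :
    posFirst (w ++ B :: C :: z) a = posFirst (w ++ (B ∪ C) :: z) a +
      if w.length < posFirst (w ++ (B ∪ C) :: z) a ∨
        (posFirst (w ++ (B ∪ C) :: z) a = w.length ∧ a ∉ B) then 1 else 0 := by
  simp only [posFirst, List.findIdx_append, List.findIdx_cons, Bool.cond_decide]
  grind

theorem posFirst_append_cons_cons_lt
    (h : posFirst (w ++ (B ∪ C) :: z) a < posFirst (w ++ (B ∪ C) :: z) b) :
    posFirst (w ++ B :: C :: z) a < posFirst (w ++ B :: C :: z) b := by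
  rw [posFirst_append_cons_cons, posFirst_append_cons_cons]
  split_ifs <;> omega

theorem posFirst_append_cons_cons_le
    (h : posFirst (w ++ (B ∪ C) :: z) a ≤ posFirst (w ++ (B ∪ C) :: z) b) :
    posFirst (w ++ B :: C :: z) a ≤ posFirst (w ++ B :: C :: z) b ∨ (a ∈ C ∧ b ∈ B) := by
  have ha : posFirst (w ++ (B ∪ C) :: z) a = w.length → a ∈ B ∪ C :=
    mem_of_posFirst_append_cons
  rw [posFirst_append_cons_cons, posFirst_append_cons_cons]
  split_ifs <;> grind

theorem countP_eq_card_filter_get {α : Type*} (u : List α) (p : α → Bool) :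
    u.countP p = #{i : Fin u.length | p (u.get i)} := by
  conv_lhs => rw [← List.ofFn_get u, List.ofFn_eq_map, List.countP_map]
  rw [List.countP_eq_length_filter,
    ← List.toFinset_card_of_nodup ((List.nodup_finRange _).filter _)]
  congr 1
  ext i
  simp

theorem existsUnique_mem_get_iff_countP_eq_one :
    (∃! i : Fin u.length, a ∈ u.get i) ↔ u.countP (a ∈ ·) = 1 := by
  rw [countP_eq_card_filter_get, Fintype.existsUnique_iff_card_one]
  simp

theorem posFirst_eq_iff_mem_get (h : ∃! i : Fin u.length, a ∈ u.get i) (i : Fin u.length) :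
    posFirst u a = i ↔ a ∈ u.get i := by
  have key : ∀ i : Fin u.length, a ∈ u.get i → posFirst u a = i := by
    refine fun i hi => (List.findIdx_eq i.2).2 ⟨by simpa using hi, fun j hj => ?_⟩
    have hji : (⟨j, hj.trans i.2⟩ : Fin u.length) ≠ i := Fin.ne_of_lt hj
    simpa using mt (h.unique · hi) hji
  refine ⟨fun hi => ?_, key i⟩
  obtain ⟨k, hk, -⟩ := h
  rwa [Fin.ext (hi.symm.trans (key k hk))]

end Position

/-- The sequences `Ω_⊲` for the stratified extensions `⊲` of `(prec, sub)` restricted to `Y`,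
described through the positions of the events. -/
structure IsExtStepSeq {X : Type*} [DecidableEq X] (prec sub : X → X → Prop) (Y : Finset X)
    (u : List (Finset X)) : Prop where
  nonempty : ∀ B ∈ u, B.Nonempty
  countP_eq : ∀ a, u.countP (a ∈ ·) = if a ∈ Y then 1 else 0
  prec_lt : ∀ a ∈ Y, ∀ b ∈ Y, prec a b → posFirst u a < posFirst u b
  sub_le : ∀ a ∈ Y, ∀ b ∈ Y, sub a b → posFirst u a ≤ posFirst u b

namespace IsExtStepSeq

variable {X : Type*} [DecidableEq X] {prec sub : X → X → Prop} {Y A B : Finset X}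
  {u v w : List (Finset X)}

theorem eq_empty_of_nil (h : IsExtStepSeq prec sub Y []) : Y = ∅ :=
  eq_empty_of_forall_notMem fun a ha => by simpa [ha] using h.countP_eq a

theorem eq_nil_of_empty (h : IsExtStepSeq prec sub ∅ u) : u = [] := by
  refine List.eq_nil_iff_forall_not_mem.2 fun B hB => ?_
  obtain ⟨a, ha⟩ := h.nonempty B hB
  have := h.countP_eq a
  simp only [notMem_empty, if_false, List.countP_eq_zero] at this
  simp_all

theorem mem_of_mem_head (h : IsExtStepSeq prec sub Y (A :: w)) {a : X} (ha : a ∈ A) :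
    a ∈ Y := by
  by_contra haY
  simpa [ha, haY] using h.countP_eq a

theorem isInitial_head (h : IsExtStepSeq prec sub Y (A :: w)) : IsInitial prec sub Y A := by
  refine ⟨fun a ha => h.mem_of_mem_head ha, fun p hp x hx => ⟨fun hxp => ?_, fun hxp => ?_⟩⟩
  · simpa [hp] using h.prec_lt x hx p (h.mem_of_mem_head hp) hxp
  · by_contra hxA
    simpa [hp, hxA] using h.sub_le x hx p (h.mem_of_mem_head hp) hxp

theorem tail (h : IsExtStepSeq prec sub Y (A :: w)) : IsExtStepSeq prec sub (Y \ A) w where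
  nonempty B hB := h.nonempty B (List.mem_cons_of_mem _ hB)
  countP_eq a := by
    have := h.countP_eq a
    by_cases haA : a ∈ A
    · have := h.mem_of_mem_head haA
      simp_all
    · simp_all
  prec_lt a ha b hb hab := by
    rw [mem_sdiff] at ha hb
    simpa [ha.2, hb.2] using h.prec_lt a ha.1 b hb.1 hab
  sub_le a ha b hb hab := by
    rw [mem_sdiff] at ha hb
    simpa [ha.2, hb.2] using h.sub_le a ha.1 b hb.1 hab

theorem of_consNonempty (h : IsExtStepSeq prec sub Y (consNonempty B u)) :
    IsExtStepSeq prec sub (Y \ B) u := by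
  rcases B.eq_empty_or_nonempty with rfl | hB
  · simpa using h
  · exact (consNonempty_of_nonempty hB ▸ h).tail

theorem isStepSeq (h : IsExtStepSeq prec sub Y u) : IsStepSeq (simS prec) u := by
  induction u generalizing Y with
  | nil => simp [IsStepSeq]
  | cons A w ih =>
    intro B hB
    rcases List.mem_cons.1 hB with rfl | hB
    · exact ⟨h.nonempty _ List.mem_cons_self, h.isInitial_head.pairwise_simS⟩
    · exact ih h.tail B hB

end IsExtStepSeq

section Invariance

variable {X : Type*} [DecidableEq X] {prec sub : X → X → Prop} {Y : Finset X}
  {u v : List (Finset X)}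

local notation:50 u " ≈ₛ " v => CTEquiv (simS prec) (serS prec sub) u v

theorem isExtStepSeq_append_split_iff {B C : Finset X} {w z : List (Finset X)}
    (hB : B.Nonempty) (hC : C.Nonempty) (hser : ∀ b ∈ B, ∀ c ∈ C, serS prec sub b c) :
    IsExtStepSeq prec sub Y (w ++ (B ∪ C) :: z) ↔
      IsExtStepSeq prec sub Y (w ++ B :: C :: z) := by
  have hcount : ∀ a,
      (w ++ (B ∪ C) :: z).countP (a ∈ ·) = (w ++ B :: C :: z).countP (a ∈ ·) := by
    intro a
    have : a ∈ B → a ∉ C := fun hb hc => (hser a hb a hc).1.1 rfl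
    simp only [List.countP_append, List.countP_cons, mem_union]
    split_ifs <;> simp_all
  have hne :
      (∀ D ∈ w ++ (B ∪ C) :: z, D.Nonempty) ↔ ∀ D ∈ w ++ B :: C :: z, D.Nonempty := by
    simp [or_imp, forall_and, hB, hC, hB.mono subset_union_left]
  constructor
  · rintro ⟨h₁, h₂, h₃, h₄⟩
    refine ⟨hne.1 h₁, fun a => hcount a ▸ h₂ a,
      fun a ha b hb hab => posFirst_append_cons_cons_lt (h₃ a ha b hb hab),
      fun a ha b hb hab => ?_⟩
    exact (posFirst_append_cons_cons_le (h₄ a ha b hb hab)).resolve_right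
      fun ⟨haC, hbB⟩ => (hser b hbB a haC).2 hab
  · rintro ⟨h₁, h₂, h₃, h₄⟩
    refine ⟨hne.2 h₁, fun a => (hcount a).trans (h₂ a), fun a ha b hb hab => ?_,
      fun a ha b hb hab => ?_⟩
    · by_contra hlt
      rcases posFirst_append_cons_cons_le (not_lt.1 hlt) with hle | ⟨hbC, haB⟩
      · exact absurd (h₃ a ha b hb hab) (not_lt.2 hle)
      · exact (hser a haB b hbC).1.2.1 hab
    · by_contra hlt
      exact absurd (h₄ a ha b hb hab) (not_le.2 (posFirst_append_cons_cons_lt (not_le.1 hlt)))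

theorem isExtStepSeq_iff_of_ctEquiv (h : u ≈ₛ v) :
    IsExtStepSeq prec sub Y u ↔ IsExtStepSeq prec sub Y v := by
  refine h.iff_of_invariant fun _ _ ⟨w, z, A, B, C, _, _, _, hB, hC, hA, hser, hu, hv⟩ => ?_
  subst hA hu hv
  exact isExtStepSeq_append_split_iff hB.1 hC.1 hser

/-- The head `A` of `u` is initial as well, so the parts `A ∩ B`, `A \ B`, `B \ A` are
serializable in every order that keeps `B \ A` after `A` or `A \ B` after `B`:
`A · (B \ A) ≡ (A ∩ B) · (A \ B) · (B \ A) ≡ (A ∩ B) · (B \ A) · (A \ B) ≡ B · (A \ B)`.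
-/
theorem IsExtStepSeq.exists_ctEquiv_consNonempty {B : Finset X}
    (hu : IsExtStepSeq prec sub Y u) (hB : IsInitial prec sub Y B) :
    ∃ u', (u ≈ₛ consNonempty B u') ∧ IsExtStepSeq prec sub (Y \ B) u' := by
  induction u generalizing Y B with
  | nil =>
    obtain rfl : B = ∅ := subset_empty.1 (hu.eq_empty_of_nil ▸ hB.1)
    exact ⟨[], by simp [CTEquiv.refl], by simpa using hu⟩
  | cons A w ih =>
    have hA := hu.isInitial_head
    obtain ⟨w', hw, hw'⟩ := ih hu.tail (hB.sdiff A)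
    have hpw : ∀ D ⊆ A ∪ B, (D : Set X).Pairwise (simS prec) := fun D hD =>
      (hA.union hB).pairwise_simS.mono (coe_subset.2 hD)
    have hAB : A \ B ⊆ A ∪ B := sdiff_subset.trans subset_union_left
    have hBA : B \ A ⊆ A ∪ B := sdiff_subset.trans subset_union_right
    have hAiB : A ∩ B ⊆ A ∪ B := inter_subset_left.trans subset_union_left
    have hw's := hw'.isStepSeq
    have e : A :: w ≈ₛ consNonempty B (consNonempty (A \ B) w') := calc
      A :: w = consNonempty A w := (consNonempty_of_nonempty (hu.nonempty A (by simp))).symm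
      _ ≈ₛ consNonempty A (consNonempty (B \ A) w') := hw.consNonempty (hpw A subset_union_left)
      _ ≈ₛ consNonempty (A ∩ B) (consNonempty (A \ B) (consNonempty (B \ A) w')) :=
        ctEquiv_consNonempty_of_union_eq (by rw [union_comm, sdiff_union_inter])
          (hpw A subset_union_left)
          (fun a ha c hc => serS_of_isInitial hB hA (mem_inter.1 ha).2 hc)
          (hw's.consNonempty (hpw _ hBA))
      _ ≈ₛ consNonempty (A ∩ B) (consNonempty (B \ A) (consNonempty (A \ B) w')) :=
        (ctEquiv_consNonempty_comm (hpw _ (union_subset hAB hBA))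
          (fun a ha c hc => serS_of_isInitial hA hB (mem_sdiff.1 ha).1 hc)
          (fun a ha c hc => serS_of_isInitial hB hA (mem_sdiff.1 ha).1 hc) hw's).consNonempty
          (hpw _ hAiB)
      _ ≈ₛ consNonempty B (consNonempty (A \ B) w') :=
        (ctEquiv_consNonempty_of_union_eq (by rw [inter_comm, union_comm, sdiff_union_inter])
          (hpw B subset_union_right)
          (fun a ha c hc => serS_of_isInitial hA hB (mem_inter.1 ha).1 hc)
          (hw's.consNonempty (hpw _ hAB))).symm
    exact ⟨_, e, ((isExtStepSeq_iff_of_ctEquiv e).1 hu).of_consNonempty⟩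

theorem ctEquiv_of_isExtStepSeq (hu : IsExtStepSeq prec sub Y u)
    (hv : IsExtStepSeq prec sub Y v) : u ≈ₛ v := by
  induction v generalizing Y u with
  | nil =>
    obtain rfl := hv.eq_empty_of_nil
    obtain rfl := hu.eq_nil_of_empty
    rfl
  | cons B v ih =>
    have hB := hv.isInitial_head
    have hBne := hv.nonempty B (by simp)
    obtain ⟨u', hu', hu''⟩ := hu.exists_ctEquiv_consNonempty hB
    rw [consNonempty_of_nonempty hBne] at hu'
    exact hu'.trans ((ih hu'' hv.tail).cons ⟨hBne, hB.pairwise_simS⟩)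

end Invariance

theorem isStratOrder_lt_comp {X : Type*} (f : X → ℕ) : IsStratOrder (fun a b => f a < f b) := by
  refine ⟨fun a => lt_irrefl _, fun _ _ _ => lt_trans, ?_⟩
  rintro a b c (rfl | hab) (rfl | hbc)
  exacts [.inl rfl, .inr hbc, .inr hab, .inr (by omega)]

section Omega

variable {X : Type*} [DecidableEq X] {prec sub r : X → X → Prop} {v : List (Finset X)}

theorem isOmega_iff : IsOmega r v ↔ (∀ a, ∃! i : Fin v.length, a ∈ v.get i) ∧
    (∀ B ∈ v, B.Nonempty) ∧ ∀ a b, r a b ↔ posFirst v a < posFirst v b := by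
  have hlt : (∀ a, ∃! i : Fin v.length, a ∈ v.get i) →
      ∀ a b, posFirst v a < posFirst v b ↔
      ∃ i j : Fin v.length, (i : ℕ) < j ∧ a ∈ v.get i ∧ b ∈ v.get j := by
    intro huniq a b
    obtain ⟨i, hi, -⟩ := huniq a
    obtain ⟨j, hj, -⟩ := huniq b
    rw [(posFirst_eq_iff_mem_get (huniq a) i).2 hi, (posFirst_eq_iff_mem_get (huniq b) j).2 hj]
    refine ⟨fun h => ⟨i, j, h, hi, hj⟩, fun ⟨i', j', h, hi', hj'⟩ => ?_⟩
    rwa [(huniq a).unique hi hi', (huniq b).unique hj hj']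
  constructor
  · rintro ⟨huniq, hclass, hr⟩
    refine ⟨huniq, fun B hB => ?_, fun a b => (hr a b).trans (hlt huniq a b).symm⟩
    obtain ⟨a, ha⟩ := hclass B hB
    exact ⟨a, (ha a).2 (.inl rfl)⟩
  · rintro ⟨huniq, hne, hr⟩
    refine ⟨huniq, fun B hB => ?_, fun a b => (hr a b).trans (hlt huniq a b)⟩
    obtain ⟨i, rfl⟩ := List.mem_iff_get.1 hB
    obtain ⟨a, ha⟩ := hne _ hB
    refine ⟨a, fun x => ?_⟩
    rw [hr, hr, ← posFirst_eq_iff_mem_get (huniq x), (posFirst_eq_iff_mem_get (huniq a) i).2 ha]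
    constructor
    · intro hx
      by_cases hxa : x = a
      exacts [.inl hxa, .inr (by omega)]
    · rintro (rfl | ⟨h₁, h₂⟩)
      · exact (posFirst_eq_iff_mem_get (huniq x) i).2 ha
      · omega

theorem isExtStepSeq_of_isOmega [Fintype X] (hr : IsStratExt prec sub r) (hv : IsOmega r v) :
    IsExtStepSeq prec sub univ v := by
  obtain ⟨huniq, hne, hpos⟩ := isOmega_iff.1 hv
  refine ⟨hne, fun a => ?_, fun a _ b _ h => (hpos a b).1 (hr.2.1 a b h),
    fun a _ b _ h => not_lt.1 fun hlt => (hr.2.2 a b h).2 ((hpos b a).2 hlt)⟩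
  simpa using existsUnique_mem_get_iff_countP_eq_one.1 (huniq a)

theorem exists_isOmega_of_isExtStepSeq [Fintype X] (hS : IsSOStruct prec sub)
    (hv : IsExtStepSeq prec sub univ v) : ∃ r, IsStratExt prec sub r ∧ IsOmega r v := by
  refine ⟨fun a b => posFirst v a < posFirst v b, ⟨isStratOrder_lt_comp _,
    fun a b h => hv.prec_lt a (mem_univ a) b (mem_univ b) h, fun a b h =>
    ⟨fun hab => hS.1 a (hab ▸ h), not_lt.2 (hv.sub_le a (mem_univ a) b (mem_univ b) h)⟩⟩,
    isOmega_iff.2 ⟨fun a => ?_, hv.nonempty, fun _ _ => Iff.rfl⟩⟩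
  exact existsUnique_mem_get_iff_countP_eq_one.2 (by simpa using hv.countP_eq a)

/-- The steps of `Ω` for the order induced by `g` are the nonempty fibres of `g`, listed by
increasing value. -/
theorem exists_isOmega_lt_comp [Fintype X] (g : X → ℕ) :
    ∃ v, IsOmega (fun a b => g a < g b) v := by
  set l := (univ.image g).sort (· ≤ ·)
  have hl : l.SortedLT := sortedLT_sort _
  set v := l.map fun n => ({x | g x = n} : Finset X)
  have hmem : ∀ a (i : Fin v.length),
      a ∈ v.get i ↔ g a = l[i.1]'(by simpa [v] using i.2) := by
    simp [v]
  have huniq : ∀ a, ∃! i : Fin v.length, a ∈ v.get i := by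
    intro a
    obtain ⟨i, hi, hia⟩ :=
      List.mem_iff_getElem.1 ((mem_sort (· ≤ ·)).2 (mem_image_of_mem g (mem_univ a)))
    refine ⟨⟨i, by simpa only [v, List.length_map] using hi⟩, (hmem _ _).2 hia.symm,
      fun j (hj : a ∈ v.get j) => ?_⟩
    rw [hmem, ← hia] at hj
    exact Fin.ext ((hl.nodup.getElem_inj_iff).1 hj.symm)
  refine ⟨v, isOmega_iff.2 ⟨huniq, fun B hB => ?_, fun a b => ?_⟩⟩
  · obtain ⟨n, hn, rfl⟩ := List.mem_map.1 hB
    obtain ⟨x, -, rfl⟩ := mem_image.1 ((mem_sort _).1 hn)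
    exact ⟨x, by simp⟩
  · obtain ⟨i, hi, -⟩ := huniq a
    obtain ⟨j, hj, -⟩ := huniq b
    rw [(posFirst_eq_iff_mem_get (huniq a) i).2 hi, (posFirst_eq_iff_mem_get (huniq b) j).2 hj,
      (hmem a i).1 hi, (hmem b j).1 hj, hl.getElem_lt_getElem_iff]

theorem exists_ctEquiv_posFirst_lt_iff [Fintype X] {Om : List (Finset X)}
    (hS : IsSOStruct prec sub) (hOm : IsExtStepSeq prec sub univ Om) {g : X → ℕ}
    (hprec : ∀ x y, prec x y → g x < g y) (hsub : ∀ x y, sub x y → g x ≤ g y) :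
    ∃ x, CTEquiv (simS prec) (serS prec sub) Om x ∧
      ∀ a b, posFirst x a < posFirst x b ↔ g a < g b := by
  obtain ⟨x, hx⟩ := exists_isOmega_lt_comp g
  have hext : IsStratExt prec sub (fun a b => g a < g b) := ⟨isStratOrder_lt_comp g, hprec,
    fun a b h => ⟨fun hab => hS.1 a (hab ▸ h), not_lt.2 (hsub a b h)⟩⟩
  exact ⟨x, ctEquiv_of_isExtStepSeq hOm (isExtStepSeq_of_isOmega hext hx),
    fun a b => ((isOmega_iff.1 hx).2.2 a b).symm⟩

end Omega

/-- The comtrace generated by a finite so-structure: the step sequences of the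
stratified extensions of `(X, prec, sub)` form exactly the comtrace congruence class of
`Ω_⊲` over the alphabet `(X, sim_S, ser_S)`, and the so-structure defined by this
comtrace is `(X, prec, sub)` itself. -/
theorem stmt16 {X : Type*} [DecidableEq X] [Fintype X]
    (prec sub : X → X → Prop) (hS : IsSOStruct prec sub)
    (r : X → X → Prop) (hr : IsStratExt prec sub r)
    (Om : List (Finset X)) (hOm : IsOmega r Om) :
    (∀ v : List (Finset X),
      (∃ r' : X → X → Prop, IsStratExt prec sub r' ∧ IsOmega r' v) ↔
        CTEquiv (simS prec) (serS prec sub) Om v) ∧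
    (∀ a b : X,
      ((∀ x : List (Finset X), CTEquiv (simS prec) (serS prec sub) Om x →
          posFirst x a < posFirst x b) ↔ prec a b) ∧
      ((∀ x : List (Finset X), CTEquiv (simS prec) (serS prec sub) Om x →
          (a ≠ b ∧ posFirst x a ≤ posFirst x b)) ↔ sub a b)) := by
  have hOm' : IsExtStepSeq prec sub univ Om := isExtStepSeq_of_isOmega hr hOm
  have hclass : ∀ x, CTEquiv (simS prec) (serS prec sub) Om x → IsExtStepSeq prec sub univ x :=
    fun x hx => (isExtStepSeq_iff_of_ctEquiv hx).1 hOm'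
  refine ⟨fun v => ⟨?_, ?_⟩, fun a b => ⟨⟨?_, ?_⟩, ⟨?_, ?_⟩⟩⟩
  · rintro ⟨r', hr', hv⟩
    exact ctEquiv_of_isExtStepSeq hOm' (isExtStepSeq_of_isOmega hr' hv)
  · exact fun hv => exists_isOmega_of_isExtStepSeq hS (hclass v hv)
  · intro h
    by_contra hab
    obtain ⟨g, hprec, hsub, hba, -⟩ := hS.exists_rank_of_not_prec hab
    obtain ⟨x, hx, hxg⟩ := exists_ctEquiv_posFirst_lt_iff hS hOm' hprec hsub
    exact not_lt.2 hba ((hxg a b).1 (h x hx))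
  · exact fun h x hx => (hclass x hx).prec_lt a (mem_univ a) b (mem_univ b) h
  · intro h
    by_contra hab
    have hne := (h Om (CTEquiv.refl Om)).1
    obtain ⟨g, hprec, hsub, -, hba⟩ := hS.exists_rank_of_not_prec fun hp => hab (hS.2.1 a b hp)
    obtain ⟨x, hx, hxg⟩ := exists_ctEquiv_posFirst_lt_iff hS hOm' hprec hsub
    refine not_lt.2 (h x hx).2 ((hxg b a).2 (hba ?_))
    rintro (_ | hs)
    exacts [hne rfl, hab hs]
  · exact fun h x hx => ⟨fun hab => hS.1 a (hab ▸ h),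
      (hclass x hx).sub_le a (mem_univ a) b (mem_univ b) h⟩
end

section
/- If G = (X, <>, ⊏) is a gso-structure, then G equals its ⋈-closure: the ⋈-closure of (X, <>, ⊏) is (X, <>, ⊏). -/
/-- A generalized stratified order structure `(X, cross, sub)`: `sub` is irreflexive,
`cross` is irreflexive and symmetric, and `(X, cross ∩ sub, sub)` is a so-structure. -/
def IsGSOStruct {X : Type*} (cross sub : X → X → Prop) : Prop :=
  (∀ a, ¬ sub a a) ∧ (∀ a, ¬ cross a a) ∧ (∀ a b, cross a b → cross b a) ∧
  IsSOStruct (fun a b => cross a b ∧ sub a b) sub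

/-- The symmetric closure of a relation. -/
def symcl {X : Type*} (r : X → X → Prop) (a b : X) : Prop := r a b ∨ r b a

/-- The `≺` component of the ◊-closure of `(X, R₁, R₂)`:
`(R₁ ∪ R₂)* ∘ R₁ ∘ (R₁ ∪ R₂)*`. -/
def diamondPrec {X : Type*} (R1 R2 : X → X → Prop) (a b : X) : Prop :=
  ∃ c d : X, Relation.ReflTransGen (fun x y => R1 x y ∨ R2 x y) a c ∧ R1 c d ∧
    Relation.ReflTransGen (fun x y => R1 x y ∨ R2 x y) d b

/-- The `⊏` component of the ◊-closure of `(X, R₁, R₂)`: `(R₁ ∪ R₂)* \ id`. -/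
def diamondSub {X : Type*} (R1 R2 : X → X → Prop) (a b : X) : Prop :=
  Relation.ReflTransGen (fun x y => R1 x y ∨ R2 x y) a b ∧ a ≠ b

/-- `R₃ = R₁ ∩ R₂*` in the definition of the ⋈-closure. -/
def bowtieR3 {X : Type*} (R1 R2 : X → X → Prop) (a b : X) : Prop :=
  R1 a b ∧ Relation.ReflTransGen R2 a b

/-!
Since `(X, <> ∩ ⊏, ⊏)` is an so-structure, axiom S3 turns every `⊏`-path between distinct points into a `⊏`-step,
and S4 absorbs `⊏`-paths on either side of a `<> ∩ ⊏`-step. As `R₃ = <> ∩ ⊏*` lies in `<> ∩ ⊏`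
(`<>` is irreflexive), the ◊-closure of `(R₃, ⊏)` adds nothing to `(<> ∩ ⊏, ⊏)`, and
symmetrising its first component stays inside the symmetric relation `<>`.
-/

theorem Relation.ReflTransGen.eq_or_of_trans_of_ne {X : Type*} {r : X → X → Prop}
    (htrans : ∀ a b c, r a b → r b c → a ≠ c → r a c) {a b : X}
    (h : Relation.ReflTransGen r a b) : a = b ∨ r a b := by
  induction h with
  | refl => exact Or.inl rfl
  | @tail c d _ hcd ih =>
    rcases ih with rfl | hac
    · exact Or.inr hcd
    · rcases eq_or_ne a d with rfl | hne
      · exact Or.inl rfl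
      · exact Or.inr (htrans a c d hac hcd hne)

namespace IsSOStruct

variable {X : Type*} {prec sub R1 R2 : X → X → Prop}

theorem eq_or_sub_of_reflTransGen (hS : IsSOStruct prec sub)
    (h1 : ∀ a b, R1 a b → prec a b) (h2 : ∀ a b, R2 a b → sub a b) {a b : X}
    (h : Relation.ReflTransGen (fun x y => R1 x y ∨ R2 x y) a b) : a = b ∨ sub a b := by
  obtain ⟨_, hS2, hS3, _⟩ := hS
  refine Relation.ReflTransGen.eq_or_of_trans_of_ne hS3 (Relation.ReflTransGen.mono ?_ _ _ h)
  exact fun x y hxy => hxy.elim (fun h => hS2 x y (h1 x y h)) (h2 x y)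

theorem diamondPrec_le (hS : IsSOStruct prec sub)
    (h1 : ∀ a b, R1 a b → prec a b) (h2 : ∀ a b, R2 a b → sub a b) {a b : X}
    (h : diamondPrec R1 R2 a b) : prec a b := by
  obtain ⟨c, d, hac, hcd, hdb⟩ := h
  have hS4 := hS.2.2.2
  have had : prec a d := by
    rcases hS.eq_or_sub_of_reflTransGen h1 h2 hac with rfl | hac
    · exact h1 a d hcd
    · exact hS4 a c d (Or.inl ⟨hac, h1 c d hcd⟩)
  rcases hS.eq_or_sub_of_reflTransGen h1 h2 hdb with rfl | hdb
  · exact had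
  · exact hS4 a d b (Or.inr ⟨had, hdb⟩)

theorem diamondSub_le (hS : IsSOStruct prec sub)
    (h1 : ∀ a b, R1 a b → prec a b) (h2 : ∀ a b, R2 a b → sub a b) {a b : X}
    (h : diamondSub R1 R2 a b) : sub a b :=
  (hS.eq_or_sub_of_reflTransGen h1 h2 h.1).resolve_left h.2

end IsSOStruct

theorem diamondSub_of_right {X : Type*} {R1 R2 : X → X → Prop} (hirr : ∀ a, ¬ R2 a a)
    {a b : X} (h : R2 a b) : diamondSub R1 R2 a b :=
  ⟨.single (Or.inr h), by rintro rfl; exact hirr a h⟩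

theorem IsGSOStruct.bowtieR3_le {X : Type*} {cross sub : X → X → Prop}
    (hG : IsGSOStruct cross sub) {a b : X} (h : bowtieR3 cross sub a b) :
    cross a b ∧ sub a b := by
  obtain ⟨_, hcross_irr, _, hS⟩ := hG
  rcases h.2.eq_or_of_trans_of_ne hS.2.2.1 with rfl | hab
  · exact absurd h.1 (hcross_irr a)
  · exact ⟨h.1, hab⟩

/-- Every gso-structure is a fixed point of the ⋈-closure: the ⋈-closure of
`(X, cross, sub)` is `(X, cross, sub)` itself. -/
theorem stmt17 {X : Type*} (cross sub : X → X → Prop)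
    (hG : IsGSOStruct cross sub) :
    (∀ a b : X,
      (symcl (diamondPrec (bowtieR3 cross sub) sub) a b ∨ cross a b) ↔ cross a b) ∧
    (∀ a b : X, diamondSub (bowtieR3 cross sub) sub a b ↔ sub a b) := by
  have hR3 : ∀ a b, bowtieR3 cross sub a b → cross a b ∧ sub a b := fun _ _ => hG.bowtieR3_le
  obtain ⟨hsub_irr, -, hcross_symm, hS⟩ := hG
  have hprec : ∀ a b, diamondPrec (bowtieR3 cross sub) sub a b → cross a b := fun _ _ h =>
    (hS.diamondPrec_le hR3 (fun _ _ => id) h).1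
  refine ⟨fun a b => ⟨?_, Or.inr⟩, fun a b =>
    ⟨hS.diamondSub_le hR3 (fun _ _ => id), diamondSub_of_right hsub_irr⟩⟩
  rintro ((hab | hba) | hab)
  · exact hprec a b hab
  · exact hcross_symm b a (hprec b a hba)
  · exact hab
end

section
/- Let G = (X, <>, ⊏) be a gso-structure and let ⊲ ∈ ext(G). Then: (1) sym(⊲ \ ser_G) ∪ inl_G = <> = <> \ sym(ser_G); (2) ⊲⌢ \ (ser_G⁻¹ ∪ inl_G) = ⊏ = ⊏ \ (ser_G⁻¹ ∪ inl_G); (3) (X, sym(⊲ \ ser_G) ∪ inl_G, ⊲⌢ \ (ser_G⁻¹ ∪ inl_G)) = (X, <>, ⊏); (4) ≺_G = ⊲ \ (ser_G ∪ inl_G); (5) <> = sym(≺_G) ∪ inl_G. -/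
/-- A stratified extension of a gso-structure `(X, cross, sub)`: a stratified order `r`
with `cross ⊆ sym(r)` and `sub ⊆ r⌢`. -/
def IsGStratExt {X : Type*} (cross sub r : X → X → Prop) : Prop :=
  IsStratOrder r ∧ (∀ a b, cross a b → (r a b ∨ r b a)) ∧
  (∀ a b, sub a b → a ≠ b ∧ ¬ r b a)

/-- The simultaneity relation of a gso-structure. -/
def simG {X : Type*} (cross : X → X → Prop) (a b : X) : Prop :=
  a ≠ b ∧ ¬ cross a b

/-- The serializability relation of a gso-structure. -/
def serG {X : Type*} (cross sub : X → X → Prop) (a b : X) : Prop :=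
  a ≠ b ∧ ¬ cross a b ∧ ¬ sub b a

/-- The interleaving relation of a gso-structure. -/
def inlG {X : Type*} (cross sub : X → X → Prop) (a b : X) : Prop :=
  cross a b ∧ ¬ sub a b ∧ ¬ sub b a

/-- Recovering a gso-structure from any of its stratified extensions. -/
theorem stmt18 {X : Type*} (cross sub r : X → X → Prop)
    (hG : IsGSOStruct cross sub) (hr : IsGStratExt cross sub r) :
    (∀ a b : X,
      ((((r a b ∧ ¬ serG cross sub a b) ∨ (r b a ∧ ¬ serG cross sub b a)) ∨
          inlG cross sub a b) ↔ cross a b) ∧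
      (cross a b ↔ (cross a b ∧ ¬ (serG cross sub a b ∨ serG cross sub b a)))) ∧
    (∀ a b : X,
      (((a ≠ b ∧ ¬ r b a) ∧ ¬ (serG cross sub b a ∨ inlG cross sub a b)) ↔ sub a b) ∧
      (sub a b ↔ (sub a b ∧ ¬ (serG cross sub b a ∨ inlG cross sub a b)))) ∧
    (∀ a b : X,
      ((((r a b ∧ ¬ serG cross sub a b) ∨ (r b a ∧ ¬ serG cross sub b a)) ∨
          inlG cross sub a b) ↔ cross a b) ∧
      (((a ≠ b ∧ ¬ r b a) ∧ ¬ (serG cross sub b a ∨ inlG cross sub a b)) ↔ sub a b)) ∧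
    (∀ a b : X,
      (cross a b ∧ sub a b) ↔
        (r a b ∧ ¬ (serG cross sub a b ∨ inlG cross sub a b))) ∧
    (∀ a b : X,
      cross a b ↔
        (((cross a b ∧ sub a b) ∨ (cross b a ∧ sub b a)) ∨ inlG cross sub a b)) := by
  obtain ⟨subIrr, crossIrr, crossSymm, _⟩ := hG
  obtain ⟨⟨rIrr, rTrans, _⟩, hCross, hSub⟩ := hr
  have rAsym : ∀ a b : X, r a b → ¬ r b a := fun a b h h' => rIrr a (rTrans _ _ _ h h')
  have rNe : ∀ a b : X, r a b → a ≠ b := fun a b h e => rIrr b (e ▸ h)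
  have h1 : ∀ a b : X, (((r a b ∧ ¬ serG cross sub a b) ∨ (r b a ∧ ¬ serG cross sub b a)) ∨
      inlG cross sub a b) ↔ cross a b := by
    intro a b
    constructor
    · rintro ((⟨hrab, hns⟩ | ⟨hrba, hns⟩) | ⟨hc, _, _⟩)
      · by_contra hc
        exact hns ⟨rNe a b hrab, hc, fun hsba => (hSub b a hsba).2 hrab⟩
      · by_contra hc
        exact hns ⟨rNe b a hrba, fun h => hc (crossSymm b a h),
          fun hsab => (hSub a b hsab).2 hrba⟩
      · exact hc
    · intro hc
      rcases hCross a b hc with h | h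
      · exact Or.inl (Or.inl ⟨h, fun hs => hs.2.1 hc⟩)
      · exact Or.inl (Or.inr ⟨h, fun hs => hs.2.1 (crossSymm a b hc)⟩)
  have h2 : ∀ a b : X, cross a b ↔
      (cross a b ∧ ¬ (serG cross sub a b ∨ serG cross sub b a)) := by
    intro a b
    exact ⟨fun hc => ⟨hc, fun h => h.elim (fun hs => hs.2.1 hc)
      (fun hs => hs.2.1 (crossSymm a b hc))⟩, fun h => h.1⟩
  have h3 : ∀ a b : X, ((a ≠ b ∧ ¬ r b a) ∧ ¬ (serG cross sub b a ∨ inlG cross sub a b)) ↔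
      sub a b := by
    intro a b
    constructor
    · rintro ⟨⟨hne, hnrba⟩, hnd⟩
      by_cases hsub : sub a b
      · exact hsub
      · have hcba : cross b a := by
          by_contra hncba
          exact hnd (Or.inl ⟨hne.symm, hncba, hsub⟩)
        have hcab := crossSymm b a hcba
        have hsba : sub b a := by
          by_contra hnsba
          exact hnd (Or.inr ⟨hcab, hsub, hnsba⟩)
        rcases hCross a b hcab with h | h
        · exact ((hSub b a hsba).2 h).elim
        · exact (hnrba h).elim
    · intro hs
      refine ⟨hSub a b hs, ?_⟩
      rintro (⟨_, _, hns⟩ | ⟨_, hns, _⟩) <;> exact hns hs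
  have h4 : ∀ a b : X, sub a b ↔
      (sub a b ∧ ¬ (serG cross sub b a ∨ inlG cross sub a b)) := by
    intro a b
    refine ⟨fun hs => ⟨hs, ?_⟩, fun h => h.1⟩
    rintro (⟨_, _, hns⟩ | ⟨_, hns, _⟩) <;> exact hns hs
  have h5 : ∀ a b : X, (cross a b ∧ sub a b) ↔
      (r a b ∧ ¬ (serG cross sub a b ∨ inlG cross sub a b)) := by
    intro a b
    constructor
    · rintro ⟨hc, hs⟩
      have hnrba := (hSub a b hs).2
      rcases hCross a b hc with h | h
      · exact ⟨h, fun hd => hd.elim (fun h' => h'.2.1 hc) (fun h' => h'.2.1 hs)⟩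
      · exact (hnrba h).elim
    · rintro ⟨hrab, hnd⟩
      have hne := rNe a b hrab
      have hcab : cross a b := by
        by_contra hn
        exact hnd (Or.inl ⟨hne, hn, fun hsba => (hSub b a hsba).2 hrab⟩)
      have hsab : sub a b := by
        by_contra hn
        exact hnd (Or.inr ⟨hcab, hn, fun hsba => (hSub b a hsba).2 hrab⟩)
      exact ⟨hcab, hsab⟩
  have h6 : ∀ a b : X, cross a b ↔
      (((cross a b ∧ sub a b) ∨ (cross b a ∧ sub b a)) ∨ inlG cross sub a b) := by
    intro a b
    constructor
    · intro hc
      by_cases hs1 : sub a b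
      · exact Or.inl (Or.inl ⟨hc, hs1⟩)
      · by_cases hs2 : sub b a
        · exact Or.inl (Or.inr ⟨crossSymm a b hc, hs2⟩)
        · exact Or.inr ⟨hc, hs1, hs2⟩
    · rintro ((⟨h, _⟩ | ⟨h, _⟩) | ⟨h, _⟩)
      · exact h
      · exact crossSymm b a h
      · exact h
  exact ⟨fun a b => ⟨h1 a b, h2 a b⟩, fun a b => ⟨h3 a b, h4 a b⟩,
    fun a b => ⟨h1 a b, h3 a b⟩, fun a b => h5 a b, fun a b => h6 a b⟩
end
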